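/- Let M̃ be the companion matrix of f(x) = x^n + c acting on Z^n (M̃ e_j = e_{j-1} for j ≥ 2, M̃ e_1 = -c e_n), with c an integer, |c| ≥ 2, q ≥ 2 an integer with gcd(q, c) = 1, and define Z_j = (M̃^*)^j(Z_0) for j ≥ 1 where Z_0 = {ξ ∈ R^n : ξ_n ∈ (Z + {1/q, ..., (q-1)/q})}. Then ∪_{j≥1} Z_j = ∪_{j=1}^n Z_j. -/

import Mathlib

/-!
`M̃` is the companion matrix of `x ^ n + c`, so `M̃ ^ n = -c • 1`: the `k`-th power (`k ≤ n`)
shifts indices by `k`, picking up the factor `-c` exactly when it wraps around. Hence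
`(M̃ᵀ) ^ n` acts as multiplication by `-c`, which maps `Z₀` into itself because `q ∤ m`
implies `q ∤ c m` when `q` and `c` are coprime. Thus `Z_{j+n} ⊆ Z_j`, and every `Z_j`
with `j > n` lies in one with `1 ≤ j ≤ n`.
-/

open Matrix

section Companion

variable {R : Type*} [Ring R]

/-- The companion matrix of `X ^ n + c`: it sends `e_j` to `e_{j-1}` for `j ≥ 1` and
`e_0` to `-c • e_{n-1}`. -/
def companionXPowAdd (n : ℕ) (c : R) : Matrix (Fin n) (Fin n) R :=
  Matrix.of fun i j =>
    if (j : ℕ) = 0 then (if (i : ℕ) = n - 1 then -c else 0)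
    else if (i : ℕ) + 1 = (j : ℕ) then 1 else 0

theorem companionXPowAdd_mul_apply {n : ℕ} (c : R) (A : Matrix (Fin n) (Fin n) R)
    (i j : Fin n) :
    (companionXPowAdd n c * A) i j =
      if h : (i : ℕ) + 1 < n then A ⟨i + 1, h⟩ j else -c * A ⟨0, by omega⟩ j := by
  have hi := i.isLt
  rw [mul_apply]
  split_ifs with h
  · refine (Finset.sum_eq_single ⟨i + 1, h⟩ (fun l _ hl => ?_) (by simp)).trans ?_
    · have : (l : ℕ) ≠ i + 1 := fun h' => hl (Fin.ext h')
      simp only [companionXPowAdd, of_apply]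
      split_ifs <;> first | omega | simp
    · simp [companionXPowAdd]
  · refine (Finset.sum_eq_single ⟨0, by omega⟩ (fun l _ hl => ?_) (by simp)).trans ?_
    · have : (l : ℕ) ≠ 0 := fun h' => hl (Fin.ext h')
      have := l.isLt
      simp only [companionXPowAdd, of_apply]
      split_ifs <;> first | omega | simp
    · simp only [companionXPowAdd, of_apply, ↓reduceIte, ite_mul, neg_mul, zero_mul,
        ite_eq_left_iff, zero_eq_neg]
      omega

theorem companionXPowAdd_pow_apply {n k : ℕ} (c : R) (hk : k ≤ n) (i j : Fin n) :
    (companionXPowAdd n c ^ k) i j =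
      if (i : ℕ) + k = j then 1 else if (i : ℕ) + k = j + n then -c else 0 := by
  have hj := j.isLt
  induction k generalizing i with
  | zero =>
    have hi := i.isLt
    simp only [pow_zero, one_apply, add_zero, Fin.ext_iff]
    split_ifs <;> first | rfl | omega
  | succ k ih =>
    have hi := i.isLt
    rw [pow_succ', companionXPowAdd_mul_apply]
    split_ifs with h <;> simp only [ih (by omega)] <;> split_ifs <;> first | omega | simp

theorem companionXPowAdd_pow_self (n : ℕ) (c : R) :
    companionXPowAdd n c ^ n = (-c) • (1 : Matrix (Fin n) (Fin n) R) := by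
  ext i j
  rw [companionXPowAdd_pow_apply c le_rfl, Matrix.smul_apply, one_apply]
  have := j.isLt
  split_ifs <;> first | omega | simp

end Companion

theorem iterate_mulVec {R ι : Type*} [Fintype ι] [DecidableEq ι] [Semiring R]
    (A : Matrix ι ι R) (k : ℕ) (v : ι → R) : (fun w => A *ᵥ w)^[k] v = (A ^ k) *ᵥ v := by
  induction k with
  | zero => simp
  | succ k ih => rw [Function.iterate_succ_apply', ih, pow_succ', mulVec_mulVec]

section Iterate

variable {α : Type*} {f : α → α} {s : Set α} {n : ℕ}

theorem image_iterate_add_subset (h : Set.MapsTo f^[n] s s) (j : ℕ) :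
    f^[j + n] '' s ⊆ f^[j] '' s := by
  rw [Function.iterate_add, Set.image_comp]
  exact Set.image_mono h.image_subset

theorem biUnion_image_iterate_eq_of_mapsTo (hn : 0 < n) (h : Set.MapsTo f^[n] s s) :
    ⋃ j ∈ {j : ℕ | 1 ≤ j}, f^[j] '' s = ⋃ j ∈ {j : ℕ | 1 ≤ j ∧ j ≤ n}, f^[j] '' s := by
  refine subset_antisymm (Set.iUnion₂_subset fun j hj => ?_)
    (Set.biUnion_subset_biUnion_left fun j hj => hj.1)
  induction j using Nat.strong_induction_on with
  | _ j ih =>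
    by_cases hjn : j ≤ n
    · exact Set.subset_biUnion_of_mem (u := fun j => f^[j] '' s) ⟨hj, hjn⟩
    · obtain ⟨k, rfl⟩ : ∃ k, j = k + n := ⟨j - n, by omega⟩
      exact (image_iterate_add_subset h k).trans (ih k (by omega) (by simp at hjn ⊢; omega))

end Iterate

/-- Let `M̃` be the companion matrix of `x^n + c` (`M̃ e_j = e_{j-1}`
for `j ≥ 2`, `M̃ e_1 = -c e_n`), `|c| ≥ 2`, `q ≥ 2` with `gcd(q, c) = 1`, and
`Z_j = (M̃ᵀ)^j(Z_0)` where `Z_0 = {ξ ∈ ℝ^n : q ξ_n ∈ ℤ, ξ_n ∉ ℤ}`. Then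
`⋃_{j ≥ 1} Z_j = ⋃_{j=1}^n Z_j`. -/
theorem stmt_18 (n : ℕ) (hn : 0 < n) (q c : ℤ)
    (hgcd : IsCoprime q c)
    (Mt : Matrix (Fin n) (Fin n) ℤ)
    (hM : ∀ i j : Fin n, Mt i j =
      (if (j : ℕ) = 0 then (if (i : ℕ) = n - 1 then -c else 0)
       else if (i : ℕ) + 1 = (j : ℕ) then 1 else 0))
    (Z : ℕ → Set (Fin n → ℝ))
    (hZ0 : Z 0 = {ξ : Fin n → ℝ | ∃ m : ℤ, ¬ (q ∣ m) ∧
      ξ ⟨n - 1, by omega⟩ = (m : ℝ) / (q : ℝ)})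
    (hZ : ∀ j : ℕ, Z j =
      (fun ξ : Fin n → ℝ => ((Mt.transpose ^ j).map (Int.cast : ℤ → ℝ)) *ᵥ ξ) '' Z 0) :
    (⋃ j ∈ {j : ℕ | 1 ≤ j}, Z j) = ⋃ j ∈ {j : ℕ | 1 ≤ j ∧ j ≤ n}, Z j := by
  set f := fun ξ : Fin n → ℝ => (Mt.transpose.map (Int.cast : ℤ → ℝ)) *ᵥ ξ
  have hmap_pow (j : ℕ) :
      (Mt.transpose ^ j).map (Int.cast : ℤ → ℝ) = Mt.transpose.map Int.cast ^ j :=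
    Matrix.map_pow _ (Int.castRingHom ℝ) j
  have hZf : Z = fun j => f^[j] '' Z 0 := funext fun j => by
    simp only [hZ j, f, iterate_mulVec, hmap_pow]
  have hMt : Mt = companionXPowAdd n c := Matrix.ext hM
  have hf_n : f^[n] = fun ξ => (-c : ℝ) • ξ := by
    funext ξ
    rw [iterate_mulVec, ← hmap_pow, ← transpose_pow, hMt, companionXPowAdd_pow_self,
      transpose_smul, transpose_one, smul_one_eq_diagonal, diagonal_map (by simp)]
    simp
  have hZ0_inv : Set.MapsTo f^[n] (Z 0) (Z 0) := by
    rw [hf_n, hZ0]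
    rintro ξ ⟨m, hm, hξ⟩
    refine ⟨-c * m, fun hdvd => hm (hgcd.dvd_of_dvd_mul_left ?_), ?_⟩
    · simpa using hdvd
    · simp only [Pi.smul_apply, hξ, smul_eq_mul]
      push_cast
      ring
  rw [hZf]
  exact biUnion_image_iterate_eq_of_mapsTo hn hZ0_inv
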